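/- Let P be an r-differential poset. Then every element x ∈ P_1 is covered by at least two thread elements of P_2. -/

import Mathlib

open Classical in
/-- The up operator `U_n : ℚP_n → ℚP_{n+1}` of a graded poset with rank function `rank`,
sending each basis element `x ∈ P_n` to the sum of the elements covering it. -/
noncomputable def upMap {P : Type*} [PartialOrder P] (rank : P → ℕ)
    [∀ m : ℕ, Fintype {x : P // rank x = m}] (n : ℕ) :
    ({x : P // rank x = n} → ℚ) →ₗ[ℚ] ({x : P // rank x = n + 1} → ℚ) :=
  Matrix.mulVecLin (fun (y : {x : P // rank x = n + 1}) (x : {x : P // rank x = n}) =>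
    if (x : P) ⋖ (y : P) then 1 else 0)

open Classical in
/-- The down operator `D_n : ℚP_n → ℚP_{n-1}` of a graded poset with rank function `rank`,
sending each basis element `x ∈ P_n` to the sum of the elements it covers.
(For `n = 0` this is the zero map on `ℚP_0` in a graded poset, matching `D_0 = 0`.) -/
noncomputable def downMap {P : Type*} [PartialOrder P] (rank : P → ℕ)
    [∀ m : ℕ, Fintype {x : P // rank x = m}] (n : ℕ) :
    ({x : P // rank x = n} → ℚ) →ₗ[ℚ] ({x : P // rank x = n - 1} → ℚ) :=
  Matrix.mulVecLin (fun (z : {x : P // rank x = n - 1}) (x : {x : P // rank x = n}) =>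
    if (z : P) ⋖ (x : P) then 1 else 0)

/-- `P` (a partial order with rank function `rank`, all rank sets finite) is an
`r`-differential poset: `r > 0`, there is a least element `0̂` of rank `0`, the poset is
graded (covers raise rank by exactly one, the rank function is strictly monotone, and every
element of nonzero rank covers something), and `D_{n+1} U_n - U_{n-1} D_n = r·I` on `ℚP_n`
for all `n ≥ 0` (for `n = 0` the relation reads `D_1 U_0 = r·I`, since `D_0 = 0`). -/
structure IsDifferentialPoset {P : Type*} [PartialOrder P] (rank : P → ℕ)
    [∀ m : ℕ, Fintype {x : P // rank x = m}] (r : ℕ) : Prop where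
  r_pos : 0 < r
  exists_bot : ∃ b : P, rank b = 0 ∧ ∀ x : P, b ≤ x
  rank_covBy : ∀ x y : P, x ⋖ y → rank y = rank x + 1
  rank_strictMono : ∀ x y : P, x < y → rank x < rank y
  exists_covBy_of_rank_ne_zero : ∀ x : P, rank x ≠ 0 → ∃ y : P, y ⋖ x
  diff_zero : downMap rank 1 ∘ₗ upMap rank 0 = (r : ℚ) • LinearMap.id
  diff : ∀ n : ℕ,
    LinearMap.comp (M₃ := {x : P // rank x = n + 1} → ℚ)
        (downMap rank (n + 2)) (upMap rank (n + 1))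
      - upMap rank n ∘ₗ downMap rank (n + 1) = (r : ℚ) • LinearMap.id

/-- An element of a graded poset is a *singleton* if it has rank `0` (i.e. it is `0̂`)
or it covers exactly one element. -/
def IsSingletonElem {P : Type*} [PartialOrder P] (rank : P → ℕ) (x : P) : Prop :=
  rank x = 0 ∨ ∃! z : P, z ⋖ x

/-- A *thread element* is a singleton which covers another singleton. -/
def IsThreadElem {P : Type*} [PartialOrder P] (rank : P → ℕ) (x : P) : Prop :=
  IsSingletonElem rank x ∧ ∃ z : P, z ⋖ x ∧ IsSingletonElem rank z

/-!
Evaluating `D U - U D = r I` on basis vectors shows that two elements of rank `n + 1` have as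
many common upper covers as common lower covers, plus `r` if they are equal. In rank `0` there
is only `0̂`, so `|P₁| = r`, and an `x ∈ P₁` has `r + 1` upper covers and exactly one upper cover
in common with each of the other `r - 1` elements of `P₁`. Double counting, the numbers of
elements of `P₁` covered by the `r + 1` upper covers of `x` add up to `(r + 1) + (r - 1) = 2r`.
Each of these numbers is at least `1`, so at least two of them equal `1`: those upper covers
cover `x` only, and are thread elements because `x` covers only `0̂`.
-/

section

open Finset Classical

theorem two_le_card_filter_eq_one_of_sum_add_two_le {ι : Type*} (A : Finset ι) (d : ι → ℕ)
    (hd : ∀ i ∈ A, 1 ≤ d i) (hsum : ∑ i ∈ A, d i + 2 ≤ 2 * #A) :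
    2 ≤ #{i ∈ A | d i = 1} := by
  have : 2 * #A ≤ ∑ i ∈ A, d i + #{i ∈ A | d i = 1} :=
    calc 2 * #A = ∑ _i ∈ A, 2 := by rw [sum_const, smul_eq_mul, mul_comm]
      _ ≤ ∑ i ∈ A, (d i + if d i = 1 then 1 else 0) :=
        sum_le_sum fun i hi => by have := hd i hi; split_ifs <;> omega
      _ = _ := by rw [sum_add_distrib, card_filter]
  omega

section Operators

variable {P : Type*} [PartialOrder P] (rank : P → ℕ) [∀ m : ℕ, Fintype {x : P // rank x = m}]

theorem upMap_apply (n : ℕ) (v : {x : P // rank x = n} → ℚ) (y : {x : P // rank x = n + 1}) :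
    upMap rank n v y = ∑ x : {x : P // rank x = n}, (if (x : P) ⋖ y then 1 else 0) * v x :=
  rfl

theorem downMap_apply (n : ℕ) (v : {x : P // rank x = n} → ℚ) (z : {x : P // rank x = n - 1}) :
    downMap rank n v z = ∑ x : {x : P // rank x = n}, (if (z : P) ⋖ x then 1 else 0) * v x :=
  rfl

theorem downMap_upMap_single_apply (n : ℕ) (x x' : {v : P // rank v = n}) :
    downMap rank (n + 1) (upMap rank n (Pi.single x 1)) x' =
      #{y : {v : P // rank v = n + 1} | (x : P) ⋖ y ∧ (x' : P) ⋖ y} := by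
  simp [downMap_apply, upMap_apply, Pi.single_apply, card_filter, ite_and]

theorem upMap_downMap_single_apply (n : ℕ) (x x' : {v : P // rank v = n + 1}) :
    upMap rank n (downMap rank (n + 1) (Pi.single x 1)) x' =
      #{z : {v : P // rank v = n} | (z : P) ⋖ x ∧ (z : P) ⋖ x'} := by
  simp [downMap_apply, upMap_apply, Pi.single_apply, card_filter, ite_and]

end Operators

theorem isThreadElem_of_covBy {P : Type*} [PartialOrder P] {rank : P → ℕ} {x y : P}
    (hxy : x ⋖ y) (hx : IsSingletonElem rank x) (hy : ∀ z, z ⋖ y → z = x) : IsThreadElem rank y :=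
  ⟨Or.inr ⟨x, hxy, hy⟩, x, hxy, hx⟩

namespace IsDifferentialPoset

variable {P : Type*} [PartialOrder P] {rank : P → ℕ} [∀ m : ℕ, Fintype {x : P // rank x = m}]
  {r : ℕ}

theorem card_commonUpperCovers (hP : IsDifferentialPoset rank r) (n : ℕ)
    (x x' : {v : P // rank v = n + 1}) :
    #{y : {v : P // rank v = n + 2} | (x : P) ⋖ y ∧ (x' : P) ⋖ y} =
      #{z : {v : P // rank v = n} | (z : P) ⋖ x ∧ (z : P) ⋖ x'} + if x = x' then r else 0 := by
  have h := congr_fun (LinearMap.congr_fun (hP.diff n) (Pi.single x 1)) x'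
  simp only [LinearMap.sub_apply, LinearMap.comp_apply, Pi.sub_apply, LinearMap.smul_apply,
    LinearMap.id_apply, Pi.smul_apply, smul_eq_mul] at h
  rw [downMap_upMap_single_apply rank (n + 1), upMap_downMap_single_apply] at h
  rcases eq_or_ne x' x with rfl | hne
  · rw [Pi.single_eq_same, mul_one, sub_eq_iff_eq_add'] at h
    rw [if_pos rfl]
    exact_mod_cast h
  · rw [Pi.single_eq_of_ne hne, mul_zero, sub_eq_zero] at h
    rw [if_neg hne.symm, add_zero]
    exact_mod_cast h

theorem le_of_rank_eq_zero (hP : IsDifferentialPoset rank r) {z : P} (hz : rank z = 0) (w : P) :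
    z ≤ w := by
  obtain ⟨b, hb, hle⟩ := hP.exists_bot
  rcases (hle z).lt_or_eq with h | rfl
  · have := hP.rank_strictMono _ _ h
    omega
  · exact hle w

theorem eq_of_rank_eq_zero (hP : IsDifferentialPoset rank r) {z w : P} (hz : rank z = 0)
    (hw : rank w = 0) : z = w :=
  (hP.le_of_rank_eq_zero hz w).antisymm (hP.le_of_rank_eq_zero hw z)

theorem covBy_of_rank_eq_zero_of_rank_eq_one (hP : IsDifferentialPoset rank r) {z y : P}
    (hz : rank z = 0) (hy : rank y = 1) : z ⋖ y := by
  refine ⟨(hP.le_of_rank_eq_zero hz y).lt_of_ne (by rintro rfl; omega), fun c hzc hcy => ?_⟩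
  have := hP.rank_strictMono z c hzc
  have := hP.rank_strictMono c y hcy
  omega

theorem isSingletonElem_of_rank_eq_one (hP : IsDifferentialPoset rank r) {x : P}
    (hx : rank x = 1) : IsSingletonElem rank x := by
  obtain ⟨b, hb, -⟩ := hP.exists_bot
  refine Or.inr ⟨b, hP.covBy_of_rank_eq_zero_of_rank_eq_one hb hx, fun z hz => ?_⟩
  have := hP.rank_covBy z x hz
  exact hP.eq_of_rank_eq_zero (by omega) hb

theorem card_rank_one (hP : IsDifferentialPoset rank r) :
    Fintype.card {v : P // rank v = 1} = r := by
  obtain ⟨b, hb, -⟩ := hP.exists_bot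
  have h := congr_fun (LinearMap.congr_fun hP.diff_zero (Pi.single ⟨b, hb⟩ 1)) ⟨b, hb⟩
  simp only [LinearMap.comp_apply, LinearMap.smul_apply, LinearMap.id_apply, Pi.smul_apply,
    smul_eq_mul, Pi.single_eq_same, mul_one] at h
  rw [downMap_upMap_single_apply, filter_true_of_mem fun y _ =>
      ⟨hP.covBy_of_rank_eq_zero_of_rank_eq_one hb y.2,
        hP.covBy_of_rank_eq_zero_of_rank_eq_one hb y.2⟩,
    card_univ] at h
  exact_mod_cast h

theorem card_commonUpperCovers_of_rank_eq_one (hP : IsDifferentialPoset rank r)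
    (x x' : {v : P // rank v = 1}) :
    #{y : {v : P // rank v = 2} | (x : P) ⋖ y ∧ (x' : P) ⋖ y} = 1 + if x = x' then r else 0 := by
  rw [hP.card_commonUpperCovers 0 x x', card_eq_one.2]
  obtain ⟨b, hb, -⟩ := hP.exists_bot
  refine ⟨⟨b, hb⟩, ?_⟩
  ext z
  simp only [mem_filter, mem_univ, true_and, mem_singleton]
  constructor
  · rintro -
    exact Subtype.ext (hP.eq_of_rank_eq_zero z.2 hb)
  · rintro rfl
    exact ⟨hP.covBy_of_rank_eq_zero_of_rank_eq_one hb x.2,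
      hP.covBy_of_rank_eq_zero_of_rank_eq_one hb x'.2⟩

theorem two_le_card_upperCovers_with_unique_lowerCover (hP : IsDifferentialPoset rank r)
    {x : P} (hx : rank x = 1) :
    2 ≤ #{y : {v : P // rank v = 2} | x ⋖ y ∧ #{z : {v : P // rank v = 1} | (z : P) ⋖ y} = 1} := by
  set A : Finset {v : P // rank v = 2} := {y | x ⋖ y}
  set d : {v : P // rank v = 2} → ℕ := fun y => #{z : {v : P // rank v = 1} | (z : P) ⋖ y}
  have hA : #A = r + 1 := by
    rw [add_comm]
    simpa [A] using hP.card_commonUpperCovers_of_rank_eq_one ⟨x, hx⟩ ⟨x, hx⟩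
  have hd : ∑ y ∈ A, d y = 2 * r :=
    calc ∑ y ∈ A, d y
        = ∑ z, #(A.bipartiteAbove
            (fun (z : {v : P // rank v = 1}) (y : {v : P // rank v = 2}) => (z : P) ⋖ y) z) :=
          (sum_card_bipartiteAbove_eq_sum_card_bipartiteBelow _).symm
      _ = ∑ z : {v : P // rank v = 1}, (1 + if ⟨x, hx⟩ = z then r else 0) := by
          refine sum_congr rfl fun z _ => ?_
          rw [bipartiteAbove, filter_filter]
          exact hP.card_commonUpperCovers_of_rank_eq_one ⟨x, hx⟩ z
      _ = 2 * r := by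
          rw [sum_add_distrib, sum_ite_eq]
          simp only [sum_const, card_univ, hP.card_rank_one, smul_eq_mul, mul_one, mem_univ,
            if_true]
          ring
  have hpos : ∀ y ∈ A, 1 ≤ d y := fun y hy =>
    card_pos.2 ⟨⟨x, hx⟩, mem_filter.2 ⟨mem_univ _, (mem_filter.1 hy).2⟩⟩
  simpa [A, d, filter_filter] using two_le_card_filter_eq_one_of_sum_add_two_le A d hpos (by omega)

theorem isThreadElem_of_card_lowerCovers_eq_one (hP : IsDifferentialPoset rank r)
    {x : P} (hx : rank x = 1) (y : {v : P // rank v = 2}) (hxy : x ⋖ y)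
    (hy : #{z : {v : P // rank v = 1} | (z : P) ⋖ y} = 1) : IsThreadElem rank y := by
  refine isThreadElem_of_covBy hxy (hP.isSingletonElem_of_rank_eq_one hx) fun z hz => ?_
  have hz1 : rank z = 1 := by
    have := hP.rank_covBy z y hz
    omega
  exact congr_arg Subtype.val <| card_le_one.1 hy.le ⟨z, hz1⟩ (by simpa using hz) ⟨x, hx⟩
    (by simpa using hxy)

theorem card_upperCovers_with_unique_lowerCover_le_ncard_threads
    (hP : IsDifferentialPoset rank r) {x : P} (hx : rank x = 1) :
    #{y : {v : P // rank v = 2} | x ⋖ y ∧ #{z : {v : P // rank v = 1} | (z : P) ⋖ y} = 1} ≤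
      {y : P | rank y = 2 ∧ x ⋖ y ∧ IsThreadElem rank y}.ncard := by
  set S : Finset {v : P // rank v = 2} :=
    {y | x ⋖ y ∧ #{z : {v : P // rank v = 1} | (z : P) ⋖ y} = 1}
  have hS : Subtype.val '' (S : Set {v : P // rank v = 2}) ⊆
      {y : P | rank y = 2 ∧ x ⋖ y ∧ IsThreadElem rank y} := by
    rintro _ ⟨y, hy, rfl⟩
    obtain ⟨hxy, hdy⟩ := (mem_filter.1 (mem_coe.1 hy)).2
    exact ⟨y.2, hxy, hP.isThreadElem_of_card_lowerCovers_eq_one hx y hxy hdy⟩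
  have hfin : {y : P | rank y = 2 ∧ x ⋖ y ∧ IsThreadElem rank y}.Finite :=
    (Set.finite_range (Subtype.val : {v : P // rank v = 2} → P)).subset
      fun y hy => ⟨⟨y, hy.1⟩, rfl⟩
  calc #S = (Subtype.val '' (S : Set {v : P // rank v = 2})).ncard := by
        rw [Set.ncard_image_of_injective _ Subtype.val_injective, Set.ncard_coe_finset]
    _ ≤ _ := Set.ncard_le_ncard hS hfin

end IsDifferentialPoset

end

/-- Gaetz–Venkataramana, Proposition 3.5. In an `r`-differential poset,
every element of rank `1` is covered by at least two thread elements of rank `2`. -/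
theorem two_threads_cover_rank_one {P : Type*} [PartialOrder P] (rank : P → ℕ)
    [∀ m : ℕ, Fintype {x : P // rank x = m}] (r : ℕ)
    (hP : IsDifferentialPoset rank r) (x : P) (hx : rank x = 1) :
    2 ≤ Set.ncard {y : P | rank y = 2 ∧ x ⋖ y ∧ IsThreadElem rank y} :=
  (hP.two_le_card_upperCovers_with_unique_lowerCover hx).trans
    (hP.card_upperCovers_with_unique_lowerCover_le_ncard_threads hx)
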